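/- arXiv:2304.07603 — 2 statements merged into one kernel-verified Lean document; each statement's English description precedes it below -/
import Mathlib

section
/- If w ∈ F(A) is right-positive and v ∈ F(A) is positive, then the product w·v is reduced as written: toWord(w·v) = toWord w ++ toWord v, and in particular |w·v| = |w| + |v|. -/
/-! Both reduced words concatenate to a reduced word unless a letter cancels at the junction.
It cannot: the last letter of a right-positive `w` is positive, its one-letter suffix having
nonnegative degree, and so is the first letter of a positive `v`. -/

namespace PositiveWords

variable {A : Type*} [DecidableEq A]

/-- The degree of a list of letters: +1 for each positive letter, −1 for each inverse letter. -/
def degree (t : List (A × Bool)) : ℤ :=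
  (t.map fun p => if p.2 then (1 : ℤ) else -1).sum

/-- A positive element of the free group: every letter of its reduced word is positive. -/
def Positive (w : FreeGroup A) : Prop :=
  ∀ p ∈ w.toWord, p.2 = true

/-- A right-positive element: every suffix of its reduced word has nonnegative degree. -/
def RightPositive (w : FreeGroup A) : Prop :=
  ∀ s t : List (A × Bool), w.toWord = s ++ t → 0 ≤ degree t

lemma RightPositive.snd_of_mem_getLast? {w : FreeGroup A} (hw : RightPositive w)
    {p : A × Bool} (hp : p ∈ w.toWord.getLast?) : p.2 = true := by
  obtain ⟨s, hs⟩ := List.getLast?_eq_some_iff.mp hp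
  have hdeg := hw s [p] hs
  by_contra hneg
  simp [degree, hneg] at hdeg

lemma toWord_mul_of_isReduced_append {w v : FreeGroup A}
    (h : FreeGroup.IsReduced (w.toWord ++ v.toWord)) :
    (w * v).toWord = w.toWord ++ v.toWord := by
  rw [FreeGroup.toWord_mul, h.reduce_eq]

lemma isReduced_toWord_append_of_rightPositive_positive {w v : FreeGroup A}
    (hw : RightPositive w) (hv : Positive v) :
    FreeGroup.IsReduced (w.toWord ++ v.toWord) :=
  List.isChain_append.2 ⟨FreeGroup.isReduced_toWord, FreeGroup.isReduced_toWord,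
    fun _ hx y hy _ => (hw.snd_of_mem_getLast? hx).trans (hv y (List.mem_of_mem_head? hy)).symm⟩

/-- If `w` is right-positive and `v` is positive, the product `w * v` is reduced as written. -/
theorem toWord_mul_of_rightPositive_positive (w v : FreeGroup A)
    (hw : RightPositive w) (hv : Positive v) :
    (w * v).toWord = w.toWord ++ v.toWord ∧
    (w * v).toWord.length = w.toWord.length + v.toWord.length := by
  have hmul := toWord_mul_of_isReduced_append
    (isReduced_toWord_append_of_rightPositive_positive hw hv)
  exact ⟨hmul, by rw [hmul, List.length_append]⟩

end PositiveWords
end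

section
/- Define the binary relation R′ on F(A) by: R′ u v holds if and only if u is right-positive and v = u·p for some positive p ∈ F(A). Then for every w ∈ F(A), w is related to the identity element 1 by the equivalence relation generated by R′ (its reflexive-symmetric-transitive closure) if and only if w is positive. -/
/-!
Positivity is invariant under `R'`: the reduced word of a right-positive `u` ends in a positive
letter (its last one-letter suffix has degree `≥ 0`), so nothing cancels in `u * p` for positive
`p`, and the reduced word of `u * p` is that of `u` followed by that of `p`. Hence it is invariant
under the generated equivalence, and `1` is positive. Conversely a positive `w` is `1 * w` with
`1` right-positive, a single `R'` step.
-/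

namespace PositiveWords

variable {A : Type*} [DecidableEq A]

/-- `R' u v` iff `u` is right-positive and `v = u · p` for some positive `p`. -/
def R' (u v : FreeGroup A) : Prop :=
  RightPositive u ∧ ∃ p : FreeGroup A, Positive p ∧ v = u * p

theorem _root_.FreeGroup.toWord_mul_of_getLast_head {x y : FreeGroup A}
    (h : ∀ a ∈ x.toWord.getLast?, ∀ b ∈ y.toWord.head?, a.1 = b.1 → a.2 = b.2) :
    (x * y).toWord = x.toWord ++ y.toWord := by
  rw [FreeGroup.toWord_mul]
  exact FreeGroup.IsReduced.reduce_eq <| List.isChain_append.2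
    ⟨FreeGroup.isReduced_toWord, FreeGroup.isReduced_toWord, h⟩

theorem RightPositive.getLast_snd {w : FreeGroup A} (hw : RightPositive w) :
    ∀ a ∈ w.toWord.getLast?, a.2 = true := by
  intro a ha
  obtain ⟨hne, rfl⟩ := List.mem_getLast?_eq_getLast ha
  have := hw _ _ (List.dropLast_append_getLast hne).symm
  by_contra hneg
  simp [degree, hneg] at this

theorem toWord_mul_of_rightPositive {u p : FreeGroup A} (hu : RightPositive u)
    (hp : Positive p) : (u * p).toWord = u.toWord ++ p.toWord :=
  FreeGroup.toWord_mul_of_getLast_head fun a ha b hb _ => by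
    rw [hu.getLast_snd a ha, hp b (List.mem_of_mem_head? hb)]

theorem positive_mul_iff {u p : FreeGroup A} (hu : RightPositive u) (hp : Positive p) :
    Positive (u * p) ↔ Positive u := by
  simp only [Positive, toWord_mul_of_rightPositive hu hp, List.mem_append, or_imp,
    forall_and, and_iff_left_iff_imp]
  exact fun _ => hp

theorem R'.positive_iff {u v : FreeGroup A} (h : R' u v) : Positive u ↔ Positive v := by
  obtain ⟨hu, p, hp, rfl⟩ := h
  exact (positive_mul_iff hu hp).symm

theorem positive_one : Positive (1 : FreeGroup A) := by
  simp [Positive]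

theorem rightPositive_one : RightPositive (1 : FreeGroup A) := by
  intro s t hst
  rw [FreeGroup.toWord_one] at hst
  obtain ⟨-, rfl⟩ := List.append_eq_nil_iff.1 hst.symm
  simp [degree]

theorem _root_.Relation.EqvGen.iff_of_forall_rel {α : Type*} {r : α → α → Prop}
    {P : α → Prop} (hr : ∀ a b, r a b → (P a ↔ P b)) {a b : α} (h : Relation.EqvGen r a b) :
    P a ↔ P b :=
  (Equivalence.eqvGen_iff (r := fun a b => P a ↔ P b)
    ⟨fun _ => Iff.rfl, Iff.symm, Iff.trans⟩).1 (h.mono hr)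

/-- `w` is related to `1` by the equivalence relation generated by `R'` iff `w` is positive. -/
theorem eqvGen_one_iff_positive' (w : FreeGroup A) :
    Relation.EqvGen (R' (A := A)) w 1 ↔ Positive w := by
  constructor
  · intro h
    exact (h.iff_of_forall_rel (P := Positive) fun _ _ h => h.positive_iff).2 positive_one
  · intro hw
    exact (Relation.EqvGen.rel 1 w ⟨rightPositive_one, w, hw, (one_mul w).symm⟩).symm

end PositiveWords
end
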